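/- arXiv:1302.4589 — 2 statements merged into one kernel-verified Lean document; each statement's English description precedes it below -/
import Mathlib

section
/- Let φ(x) = 1 + |x| on ℝ^n (where |x| is the Euclidean norm). For β > n, define Ψ(β) = ln(∏_{i=1}^n (β - i) · ∫_{ℝ^n} φ(x)^{-β} dx). Then Ψ(β) + Ψ(β+2) = 2Ψ(β+1) for all β > n+1, i.e. the reverse Hölder inequality (3.5) holds with equality for this φ. -/
/-!
The quantity `∏_{i=1}^n (β - i) · ∫ (1 + ‖x‖)^(-β)` does not depend on `β > n`, so `Ψ` is constant
there. Indeed, in polar coordinates the integral is a multiple of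
`J(β) = ∫_0^∞ y^(n-1) (1 + y)^(-β) dy`, and integrating `d/dy (y^n (1 + y)^(-β))` over `(0, ∞)` gives
`β J(β + 1) = (β - n) J(β)`, which is exactly compensated by
`(β - n) ∏ (β + 1 - i) = β ∏ (β - i)`.
-/

open MeasureTheory Set Filter Topology

lemma pow_mul_one_add_rpow_neg_le {y : ℝ} (hy : 0 < y) (k : ℕ) {γ : ℝ} (hγ : 0 ≤ γ) :
    y ^ k * (1 + y) ^ (-γ) ≤ y ^ ((k : ℝ) - γ) := by
  calc y ^ k * (1 + y) ^ (-γ) ≤ y ^ k * y ^ (-γ) := by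
        refine mul_le_mul_of_nonneg_left ?_ (by positivity)
        exact Real.rpow_le_rpow_of_nonpos hy (by linarith) (by linarith)
    _ = y ^ ((k : ℝ) - γ) := by
        rw [← Real.rpow_natCast, ← Real.rpow_add hy, sub_eq_add_neg]

lemma continuousOn_pow_mul_one_add_rpow_neg (k : ℕ) (γ : ℝ) :
    ContinuousOn (fun y : ℝ => y ^ k * (1 + y) ^ (-γ)) (Ici 0) := by
  refine (continuous_pow k).continuousOn.mul (ContinuousOn.rpow_const (by fun_prop) ?_)
  intro y (hy : 0 ≤ y)
  left
  positivity

lemma integrableOn_Ioi_pow_mul_one_add_rpow_neg (k : ℕ) {γ : ℝ} (hγ : k + 1 < γ) :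
    IntegrableOn (fun y : ℝ => y ^ k * (1 + y) ^ (-γ)) (Ioi 0) := by
  have hcont := continuousOn_pow_mul_one_add_rpow_neg k γ
  rw [← Ioc_union_Ioi_eq_Ioi zero_le_one]
  refine .union ((hcont.mono Icc_subset_Ici_self).integrableOn_Icc.mono_set Ioc_subset_Icc_self) ?_
  refine (integrableOn_Ioi_rpow_of_lt (a := (k : ℝ) - γ) (by linarith) one_pos).mono'
    ((hcont.mono fun y (hy : 1 < y) => zero_le_one.trans hy.le).aestronglyMeasurable
      measurableSet_Ioi) ?_
  filter_upwards [ae_restrict_mem measurableSet_Ioi] with y (hy : 1 < y)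
  rw [Real.norm_of_nonneg (by positivity)]
  exact pow_mul_one_add_rpow_neg_le (by linarith) k (by linarith)

lemma tendsto_pow_mul_one_add_rpow_neg_atTop (k : ℕ) {γ : ℝ} (hγ : k < γ) :
    Tendsto (fun y : ℝ => y ^ k * (1 + y) ^ (-γ)) atTop (𝓝 0) := by
  have hbound : Tendsto (fun y : ℝ => y ^ ((k : ℝ) - γ)) atTop (𝓝 0) := by
    simpa only [neg_sub] using tendsto_rpow_neg_atTop (y := γ - k) (by linarith)
  refine squeeze_zero' ?_ ?_ hbound
  · filter_upwards [eventually_ge_atTop 0] with y hy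
    positivity
  · filter_upwards [eventually_gt_atTop 0] with y hy
    exact pow_mul_one_add_rpow_neg_le hy k (by linarith [(k.cast_nonneg : (0 : ℝ) ≤ k)])

lemma hasDerivAt_pow_succ_mul_one_add_rpow_neg (k : ℕ) (β : ℝ) {y : ℝ} (hy : 0 ≤ y) :
    HasDerivAt (fun y : ℝ => y ^ (k + 1) * (1 + y) ^ (-β))
      ((k + 1 - β) * (y ^ k * (1 + y) ^ (-β)) + β * (y ^ k * (1 + y) ^ (-(β + 1)))) y := by
  have hy1 : 0 < 1 + y := by linarith
  refine ((hasDerivAt_pow (k + 1) y).mul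
    (((hasDerivAt_id y).const_add 1).rpow_const (p := -β) (Or.inl hy1.ne'))).congr_deriv ?_
  have hsucc : (1 + y) ^ (-β) = (1 + y) ^ (-(β + 1)) * (1 + y) := by
    rw [← Real.rpow_add_one hy1.ne']
    ring_nf
  simp only [id, hsucc, show -β - 1 = -(β + 1) by ring]
  push_cast
  ring

lemma mul_integral_Ioi_pow_mul_one_add_rpow_neg_add_one (k : ℕ) {β : ℝ} (hβ : k + 1 < β) :
    β * ∫ y in Ioi (0 : ℝ), y ^ k * (1 + y) ^ (-(β + 1))
      = (β - (k + 1)) * ∫ y in Ioi (0 : ℝ), y ^ k * (1 + y) ^ (-β) := by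
  have hI := integrableOn_Ioi_pow_mul_one_add_rpow_neg k hβ
  have hI₁ := integrableOn_Ioi_pow_mul_one_add_rpow_neg k (γ := β + 1) (by linarith)
  have hFTC := integral_Ioi_of_hasDerivAt_of_tendsto
    (hasDerivAt_pow_succ_mul_one_add_rpow_neg k β le_rfl).continuousAt.continuousWithinAt
    (fun y (hy : 0 < y) => hasDerivAt_pow_succ_mul_one_add_rpow_neg k β hy.le)
    ((hI.const_mul _).add (hI₁.const_mul _))
    (tendsto_pow_mul_one_add_rpow_neg_atTop (k + 1) (by push_cast; linarith))
  rw [integral_add (hI.const_mul _) (hI₁.const_mul _), integral_const_mul, integral_const_mul,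
    zero_pow k.succ_ne_zero, zero_mul, zero_sub] at hFTC
  linarith

lemma mul_integral_one_add_norm_rpow_neg_add_one {E : Type*} [NormedAddCommGroup E]
    [NormedSpace ℝ E] [FiniteDimensional ℝ E] [MeasurableSpace E] [BorelSpace E]
    (μ : Measure E) [μ.IsAddHaarMeasure] {β : ℝ} (hβ : Module.finrank ℝ E < β) :
    β * ∫ x, (1 + ‖x‖) ^ (-(β + 1)) ∂μ
      = (β - Module.finrank ℝ E) * ∫ x, (1 + ‖x‖) ^ (-β) ∂μ := by
  rcases subsingleton_or_nontrivial E with hE | hE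
  · simp only [Subsingleton.elim _ (0 : E), norm_zero, add_zero, Real.one_rpow,
      Module.finrank_zero_of_subsingleton, Nat.cast_zero, sub_zero]
  obtain ⟨k, hk⟩ : ∃ k, Module.finrank ℝ E = k + 1 :=
    Nat.exists_eq_add_one.mpr Module.finrank_pos
  rw [integral_fun_norm_addHaar μ fun r => (1 + r) ^ (-(β + 1)),
    integral_fun_norm_addHaar μ fun r => (1 + r) ^ (-β)]
  simp only [hk, Nat.add_sub_cancel, smul_eq_mul, nsmul_eq_mul] at hβ ⊢
  push_cast at hβ ⊢
  linear_combination ((k + 1) * μ.real (Metric.ball 0 1)) *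
    mul_integral_Ioi_pow_mul_one_add_rpow_neg_add_one k hβ

lemma sub_mul_prod_Icc_add_one_sub (n : ℕ) (β : ℝ) :
    (β - n) * ∏ i ∈ Finset.Icc 1 n, (β + 1 - i) = β * ∏ i ∈ Finset.Icc 1 n, (β - i) := by
  induction n with
  | zero => simp
  | succ m ih =>
    rw [Finset.prod_Icc_succ_top (by omega), Finset.prod_Icc_succ_top (by omega)]
    push_cast at ih ⊢
    linear_combination (β - (m + 1)) * ih

lemma prod_Icc_sub_mul_integral_one_add_norm_rpow_neg_add_one (n : ℕ) {β : ℝ} (hβ : n < β) :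
    (∏ i ∈ Finset.Icc 1 n, (β + 1 - i)) * ∫ x : EuclideanSpace ℝ (Fin n), (1 + ‖x‖) ^ (-(β + 1))
      = (∏ i ∈ Finset.Icc 1 n, (β - i)) * ∫ x : EuclideanSpace ℝ (Fin n), (1 + ‖x‖) ^ (-β) := by
  have hβ₀ : β ≠ 0 := (lt_of_le_of_lt n.cast_nonneg hβ).ne'
  have hI := mul_integral_one_add_norm_rpow_neg_add_one
    (volume : Measure (EuclideanSpace ℝ (Fin n))) (β := β) (by simpa using hβ)
  rw [finrank_euclideanSpace_fin] at hI
  apply mul_left_cancel₀ hβ₀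
  linear_combination (∏ i ∈ Finset.Icc 1 n, (β + 1 - i)) * hI
    + (∫ x : EuclideanSpace ℝ (Fin n), (1 + ‖x‖) ^ (-β)) * sub_mul_prod_Icc_add_one_sub n β

theorem equality_case_reverse_holder_general (n : ℕ) (Ψ : ℝ → ℝ)
    (hΨ : ∀ β : ℝ, Ψ β = Real.log ((∏ i ∈ Finset.Icc 1 n, (β - (i : ℝ))) *
      ∫ x : EuclideanSpace ℝ (Fin n), (1 + ‖x‖) ^ (-β))) :
    ∀ β : ℝ, β > n + 1 → Ψ β + Ψ (β + 2) = 2 * Ψ (β + 1) := by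
  intro β hβ
  have hΨ_succ : ∀ γ : ℝ, n < γ → Ψ (γ + 1) = Ψ γ := fun γ hγ => by
    rw [hΨ, hΨ, ← prod_Icc_sub_mul_integral_one_add_norm_rpow_neg_add_one n hγ]
  rw [show β + 2 = β + 1 + 1 by ring, hΨ_succ (β + 1) (by linarith), hΨ_succ β (by linarith)]
  ring

theorem equality_case_reverse_holder (n : ℕ) (hn : 1 ≤ n) (Ψ : ℝ → ℝ)
    (hΨ : ∀ β : ℝ, Ψ β = Real.log ((∏ i ∈ Finset.Icc 1 n, (β - (i : ℝ))) *
      ∫ x : EuclideanSpace ℝ (Fin n), (1 + ‖x‖) ^ (-β))) :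
    ∀ β : ℝ, β > n + 1 → Ψ β + Ψ (β + 2) = 2 * Ψ (β + 1) :=
  equality_case_reverse_holder_general n Ψ hΨ
end

section
/- The constant 1/(2(β-1)) in the weighted Poincaré inequality for the Cauchy measure τ_β is sharp: for f(x) = ⟨v₀, x⟩ with v₀ ∈ ℝ^n fixed and β ≥ n+1, one has Var_{τ_β}(f) = (1/(2(β-1))) ∫ |∇f|²(1+|x|²) dτ_β. -/
/-!
The mean of `⟪v₀, x⟫` vanishes because the integrand is odd. For the second moment, rotate so
that `v₀` points along the first coordinate and integrate that coordinate first: for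
`a = 1 + ‖y‖²`, where `y` collects the other coordinates, integrating the derivative of
`t ↦ t (a + t²)^(1-β)` over `ℝ` gives `2(β-1) ∫ t² (a + t²)^(-β) dt = ∫ (a + t²)^(1-β) dt`.
Fubini turns this into `2(β-1) ∫ ⟪v₀, x⟫² dτ_β = ‖v₀‖² ∫ (1 + ‖x‖²) dτ_β`.
-/

open MeasureTheory Real Filter Module Topology
open scoped RealInnerProductSpace

lemma rpow_one_sub_eq_mul_rpow_neg {w : ℝ} (hw : 0 < w) (β : ℝ) :
    w ^ (1 - β) = w * w ^ (-β) := by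
  rw [sub_eq_neg_add, rpow_add_one hw.ne', mul_comm]

section Integrability

variable {E : Type*} [NormedAddCommGroup E] [NormedSpace ℝ E] [FiniteDimensional ℝ E]
  [MeasurableSpace E] [BorelSpace E] (μ : Measure E) [μ.IsAddHaarMeasure]

lemma integrable_add_norm_sq_rpow_neg {a s : ℝ} (ha : 0 < a) (hs : (finrank ℝ E : ℝ) < 2 * s) :
    Integrable (fun x => (a + ‖x‖ ^ 2) ^ (-s)) μ := by
  have hs0 : 0 ≤ s := by linarith [(finrank ℝ E).cast_nonneg (α := ℝ)]
  set c := min a 1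
  have hc : 0 < c := lt_min ha one_pos
  have hone := (integrable_rpow_neg_one_add_norm_sq (μ := μ) hs).const_mul (c ^ (-s))
  refine hone.mono' (Measurable.aestronglyMeasurable (by fun_prop))
    (Eventually.of_forall fun x => ?_)
  have hlow : c * (1 + ‖x‖ ^ 2) ≤ a + ‖x‖ ^ 2 := by
    nlinarith [min_le_left a 1, min_le_right a 1, sq_nonneg ‖x‖]
  rw [norm_of_nonneg (by positivity), show -(2 * s) / 2 = -s by ring,
    ← mul_rpow hc.le (by positivity)]
  exact rpow_le_rpow_of_nonpos (by positivity) hlow (by linarith)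

lemma integrable_sq_mul_add_norm_sq_rpow_neg {g : E → ℝ} (hg : Continuous g)
    (hg_le : ∀ x, |g x| ≤ ‖x‖) {a β : ℝ} (ha : 0 < a)
    (hβ : (finrank ℝ E : ℝ) < 2 * (β - 1)) :
    Integrable (fun x => g x ^ 2 * (a + ‖x‖ ^ 2) ^ (-β)) μ := by
  have hdom := integrable_add_norm_sq_rpow_neg μ ha hβ
  refine hdom.mono' (Measurable.aestronglyMeasurable (by fun_prop))
    (Eventually.of_forall fun x => ?_)
  have hw : 0 < a + ‖x‖ ^ 2 := by positivity
  have hgx : g x ^ 2 ≤ a + ‖x‖ ^ 2 := by nlinarith [sq_abs (g x), abs_nonneg (g x), hg_le x]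
  rw [norm_of_nonneg (by positivity), neg_sub, rpow_one_sub_eq_mul_rpow_neg hw]
  exact mul_le_mul_of_nonneg_right hgx (rpow_nonneg hw.le _)

end Integrability

section OneDim

variable {a β : ℝ}

lemma hasDerivAt_mul_add_sq_rpow (ha : 0 < a) (t : ℝ) :
    HasDerivAt (fun t => t * (a + t ^ 2) ^ (1 - β))
      ((a + t ^ 2) ^ (1 - β) - 2 * (β - 1) * (t ^ 2 * (a + t ^ 2) ^ (-β))) t := by
  have hw : 0 < a + t ^ 2 := by positivity
  have hpow : HasDerivAt (fun t => (a + t ^ 2) ^ (1 - β))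
      (2 * t * (1 - β) * (a + t ^ 2) ^ (1 - β - 1)) t := by
    refine HasDerivAt.rpow_const ?_ (Or.inl hw.ne')
    simpa using (hasDerivAt_pow 2 t).const_add a
  refine ((hasDerivAt_id t).mul hpow).congr_deriv ?_
  rw [sub_sub_cancel_left, rpow_one_sub_eq_mul_rpow_neg hw, id]
  ring

lemma tendsto_mul_add_sq_rpow_atTop (ha : 0 ≤ a) (hβ : 3 / 2 < β) :
    Tendsto (fun t => t * (a + t ^ 2) ^ (1 - β)) atTop (𝓝 0) := by
  have hdecay : Tendsto (fun t : ℝ => t ^ (3 - 2 * β)) atTop (𝓝 0) := by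
    simpa using tendsto_rpow_neg_atTop (y := 2 * β - 3) (by linarith)
  refine squeeze_zero' ?_ ?_ hdecay
  · filter_upwards [eventually_ge_atTop 0] with t ht
    positivity
  · filter_upwards [eventually_gt_atTop 0] with t ht
    calc t * (a + t ^ 2) ^ (1 - β) ≤ t * (t ^ 2) ^ (1 - β) := by
          refine mul_le_mul_of_nonneg_left ?_ ht.le
          exact rpow_le_rpow_of_nonpos (by positivity) (by linarith) (by linarith)
      _ = t ^ (3 - 2 * β) := by
          rw [← rpow_natCast, ← rpow_mul ht.le,
            show (3 : ℝ) - 2 * β = 1 + (2 : ℕ) * (1 - β) by push_cast; ring, rpow_add ht, rpow_one]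

theorem integral_sq_mul_add_sq_rpow (ha : 0 < a) (hβ : 3 / 2 < β) :
    2 * (β - 1) * ∫ t : ℝ, t ^ 2 * (a + t ^ 2) ^ (-β) = ∫ t : ℝ, (a + t ^ 2) ^ (1 - β) := by
  have hβ' : (finrank ℝ ℝ : ℝ) < 2 * (β - 1) := by rw [finrank_self]; push_cast; linarith
  have hw : Integrable fun t : ℝ => (a + t ^ 2) ^ (1 - β) := by
    simpa [neg_sub] using integrable_add_norm_sq_rpow_neg volume ha hβ'
  have hsq : Integrable fun t : ℝ => t ^ 2 * (a + t ^ 2) ^ (-β) := by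
    simpa using integrable_sq_mul_add_norm_sq_rpow_neg volume continuous_id
      (fun t => (norm_eq_abs t).ge) ha hβ'
  have htop := tendsto_mul_add_sq_rpow_atTop ha.le hβ
  have hbot : Tendsto (fun t => t * (a + t ^ 2) ^ (1 - β)) atBot (𝓝 0) := by
    simpa [Function.comp_def, neg_sq] using (htop.comp tendsto_neg_atBot_atTop).neg
  have hFTC := integral_of_hasDerivAt_of_tendsto (hasDerivAt_mul_add_sq_rpow (β := β) ha)
    (hw.sub (hsq.const_mul _)) hbot htop
  rw [integral_sub hw (hsq.const_mul _), integral_const_mul] at hFTC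
  linarith

end OneDim

namespace EuclideanSpace

variable (m : ℕ)

noncomputable def consMeasurableEquiv :
    ℝ × EuclideanSpace ℝ (Fin m) ≃ᵐ EuclideanSpace ℝ (Fin (m + 1)) :=
  ((MeasurableEquiv.refl ℝ).prodCongr (MeasurableEquiv.toLp 2 _).symm).trans
    ((MeasurableEquiv.piFinSuccAbove (fun _ => ℝ) 0).symm.trans (MeasurableEquiv.toLp 2 _))

variable {m}

lemma consMeasurableEquiv_apply (p : ℝ × EuclideanSpace ℝ (Fin m)) :
    consMeasurableEquiv m p = WithLp.toLp 2 (Fin.cons p.1 p.2) := by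
  simp [consMeasurableEquiv, MeasurableEquiv.piFinSuccAbove_symm_apply, Fin.insertNthEquiv,
    MeasurableEquiv.prodCongr]

lemma norm_sq_consMeasurableEquiv (p : ℝ × EuclideanSpace ℝ (Fin m)) :
    ‖consMeasurableEquiv m p‖ ^ 2 = p.1 ^ 2 + ‖p.2‖ ^ 2 := by
  simp [consMeasurableEquiv_apply, EuclideanSpace.norm_sq_eq, Fin.sum_univ_succ]

lemma consMeasurableEquiv_apply_zero (p : ℝ × EuclideanSpace ℝ (Fin m)) :
    consMeasurableEquiv m p 0 = p.1 := by
  simp [consMeasurableEquiv_apply]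

variable (m)

lemma measurePreserving_consMeasurableEquiv : MeasurePreserving (consMeasurableEquiv m) :=
  (MeasurePreserving.id volume |>.prod (volume_preserving_symm_measurableEquiv_toLp _)).trans
    ((volume_preserving_piFinSuccAbove (fun _ => ℝ) 0).symm.trans
      (volume_preserving_symm_measurableEquiv_toLp _).symm)

variable {m}

lemma integral_succ_eq_integral_integral_cons {F : EuclideanSpace ℝ (Fin (m + 1)) → ℝ}
    (hF : Integrable F) :
    ∫ x, F x = ∫ y, ∫ t, F (consMeasurableEquiv m (t, y)) := by
  have he := measurePreserving_consMeasurableEquiv m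
  rw [← he.integral_comp' F]
  exact integral_prod_symm _
    ((he.integrable_comp_emb (consMeasurableEquiv m).measurableEmbedding).mpr hF)

theorem integral_sq_apply_zero_mul_one_add_norm_sq_rpow {m : ℕ} {β : ℝ}
    (hβ : (m + 1 : ℝ) < 2 * (β - 1)) :
    2 * (β - 1) * ∫ x : EuclideanSpace ℝ (Fin (m + 1)), x 0 ^ 2 * (1 + ‖x‖ ^ 2) ^ (-β) =
      ∫ x : EuclideanSpace ℝ (Fin (m + 1)), (1 + ‖x‖ ^ 2) ^ (1 - β) := by
  have hdim : (finrank ℝ (EuclideanSpace ℝ (Fin (m + 1))) : ℝ) < 2 * (β - 1) := by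
    simpa using hβ
  have hw := integrable_add_norm_sq_rpow_neg volume one_pos hdim
  have hsq := integrable_sq_mul_add_norm_sq_rpow_neg volume (g := fun x => x 0) (by fun_prop)
    (fun x => PiLp.norm_apply_le x 0) one_pos hdim
  rw [neg_sub] at hw
  rw [integral_succ_eq_integral_integral_cons hsq, integral_succ_eq_integral_integral_cons hw,
    ← integral_const_mul]
  refine integral_congr_ae (Eventually.of_forall fun y => ?_)
  have hcoord : ∀ t, 1 + ‖consMeasurableEquiv m (t, y)‖ ^ 2 = 1 + ‖y‖ ^ 2 + t ^ 2 := fun t => by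
    rw [norm_sq_consMeasurableEquiv]
    ring
  simp only [hcoord, consMeasurableEquiv_apply_zero]
  exact integral_sq_mul_add_sq_rpow (by positivity) (by linarith [(m.cast_nonneg : (0 : ℝ) ≤ m)])

end EuclideanSpace

lemma integral_inner_mul_comp_norm_eq_zero {E : Type*} [NormedAddCommGroup E]
    [InnerProductSpace ℝ E] [MeasurableSpace E] [BorelSpace E] (μ : Measure E) [μ.IsNegInvariant]
    (v : E) (g : ℝ → ℝ) :
    ∫ x, ⟪v, x⟫ * g ‖x‖ ∂μ = 0 := by
  have hodd := integral_neg_eq_self (fun x => ⟪v, x⟫ * g ‖x‖) μ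
  simp only [inner_neg_right, norm_neg, neg_mul, integral_neg] at hodd
  linarith

theorem integral_inner_sq_mul_one_add_norm_sq_rpow {E : Type*} [NormedAddCommGroup E]
    [InnerProductSpace ℝ E] [FiniteDimensional ℝ E] [MeasurableSpace E] [BorelSpace E]
    (v : E) {β : ℝ} (hβ : (finrank ℝ E : ℝ) < 2 * (β - 1)) :
    2 * (β - 1) * ∫ x, ⟪v, x⟫ ^ 2 * (1 + ‖x‖ ^ 2) ^ (-β) =
      ‖v‖ ^ 2 * ∫ x : E, (1 + ‖x‖ ^ 2) ^ (1 - β) := by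
  rcases eq_or_ne v 0 with rfl | hv
  · simp
  obtain ⟨m, hm⟩ : ∃ m, finrank ℝ E = m + 1 :=
    Nat.exists_eq_add_one.mpr (finrank_pos_iff_exists_ne_zero.mpr ⟨v, hv⟩)
  have hunit : Orthonormal ℝ (Set.domRestrict {(0 : Fin (m + 1))} fun _ => ‖v‖⁻¹ • v) := by
    refine ⟨fun _ => ?_, fun i j hij => absurd (Subsingleton.elim i j) hij⟩
    rw [Set.domRestrict_apply, norm_smul, norm_inv, norm_norm,
      inv_mul_cancel₀ (norm_ne_zero_iff.mpr hv)]
  obtain ⟨b, hb⟩ := hunit.exists_orthonormalBasis_extension_of_card_eq (by simpa using hm)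
  have hinner : ∀ x, ⟪v, x⟫ = ‖v‖ * b.repr x 0 := fun x => by
    rw [b.repr_apply_apply, hb 0 rfl, real_inner_smul_left,
      mul_inv_cancel_left₀ (norm_ne_zero_iff.mpr hv)]
  have hrepr : ∀ F : EuclideanSpace ℝ (Fin (m + 1)) → ℝ, ∫ x, F (b.repr x) = ∫ y, F y :=
    b.measurePreserving_measurableEquiv.integral_comp'
  have hm' : (m + 1 : ℝ) < 2 * (β - 1) := by rw [hm] at hβ; exact_mod_cast hβ
  calc 2 * (β - 1) * ∫ x, ⟪v, x⟫ ^ 2 * (1 + ‖x‖ ^ 2) ^ (-β)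
      = ‖v‖ ^ 2 * (2 * (β - 1) * ∫ x, b.repr x 0 ^ 2 * (1 + ‖b.repr x‖ ^ 2) ^ (-β)) := by
        simp_rw [hinner, mul_pow, LinearIsometryEquiv.norm_map, mul_assoc, integral_const_mul]
        ring
    _ = ‖v‖ ^ 2 * ∫ x, (1 + ‖b.repr x‖ ^ 2) ^ (1 - β) := by
        rw [hrepr fun y => y 0 ^ 2 * (1 + ‖y‖ ^ 2) ^ (-β),
          EuclideanSpace.integral_sq_apply_zero_mul_one_add_norm_sq_rpow hm',
          hrepr fun y => (1 + ‖y‖ ^ 2) ^ (1 - β)]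
    _ = ‖v‖ ^ 2 * ∫ x, (1 + ‖x‖ ^ 2) ^ (1 - β) := by
        simp_rw [LinearIsometryEquiv.norm_map]

theorem weighted_poincare_cauchy_sharp_general (n : ℕ) (β : ℝ) (hβ : β ≥ n + 1)
    (v₀ : EuclideanSpace ℝ (Fin n))
    (Z : ℝ) :
    (∫ x : EuclideanSpace ℝ (Fin n), (inner ℝ v₀ x : ℝ) ^ 2 * ((1 + ‖x‖ ^ 2) ^ (-β) / Z)) -
      (∫ x : EuclideanSpace ℝ (Fin n), (inner ℝ v₀ x : ℝ) * ((1 + ‖x‖ ^ 2) ^ (-β) / Z)) ^ 2 =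
      (1 / (2 * (β - 1))) *
        ∫ x : EuclideanSpace ℝ (Fin n), ‖v₀‖ ^ 2 * (1 + ‖x‖ ^ 2) * ((1 + ‖x‖ ^ 2) ^ (-β) / Z) := by
  rcases eq_or_ne v₀ 0 with rfl | hv
  · simp
  have hn : n ≠ 0 := by
    rintro rfl
    exact hv (Subsingleton.elim _ _)
  have hβn : (finrank ℝ (EuclideanSpace ℝ (Fin n)) : ℝ) < 2 * (β - 1) := by
    rw [finrank_euclideanSpace_fin]
    have : (1 : ℝ) ≤ n := by exact_mod_cast Nat.one_le_iff_ne_zero.mpr hn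
    linarith
  have hβ1 : β - 1 ≠ 0 := by linarith
  have hmean := integral_inner_mul_comp_norm_eq_zero volume v₀ fun r => (1 + r ^ 2) ^ (-β) / Z
  have hweight : ∀ x : EuclideanSpace ℝ (Fin n),
      ‖v₀‖ ^ 2 * (1 + ‖x‖ ^ 2) * ((1 + ‖x‖ ^ 2) ^ (-β) / Z) =
        ‖v₀‖ ^ 2 * (1 + ‖x‖ ^ 2) ^ (1 - β) / Z := fun x => by
    rw [rpow_one_sub_eq_mul_rpow_neg (by positivity)]
    ring
  simp_rw [hmean, hweight, ← mul_div_assoc, integral_div, integral_const_mul,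
    ← integral_inner_sq_mul_one_add_norm_sq_rpow v₀ hβn]
  field_simp
  ring

theorem weighted_poincare_cauchy_sharp (n : ℕ) (β : ℝ) (hβ : β ≥ n + 1)
    (v₀ : EuclideanSpace ℝ (Fin n))
    (Z : ℝ) (hZ : Z = ∫ x : EuclideanSpace ℝ (Fin n), (1 + ‖x‖ ^ 2) ^ (-β)) :
    (∫ x : EuclideanSpace ℝ (Fin n), (inner ℝ v₀ x : ℝ) ^ 2 * ((1 + ‖x‖ ^ 2) ^ (-β) / Z)) -
      (∫ x : EuclideanSpace ℝ (Fin n), (inner ℝ v₀ x : ℝ) * ((1 + ‖x‖ ^ 2) ^ (-β) / Z)) ^ 2 =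
      (1 / (2 * (β - 1))) *
        ∫ x : EuclideanSpace ℝ (Fin n), ‖v₀‖ ^ 2 * (1 + ‖x‖ ^ 2) * ((1 + ‖x‖ ^ 2) ^ (-β) / Z) :=
  weighted_poincare_cauchy_sharp_general n β hβ v₀ Z
end
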